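/- Let f ∈ 𝓕 and t ∈ (t⁻, t⁺). Then there exist η > 0 and ε > 0 such that every μ ∈ M_f with λ(μ) > −∞ and h(μ) − t·λ(μ) > p(t) − ε satisfies h(μ) > η. -/

import Mathlib

open MeasureTheory Set Filter Topology
open scoped ENNReal NNReal Classical

noncomputable section

namespace IT

/-- The unit interval `[0,1]` viewed as a subset of `ℝ`. -/
def unitI : Set ℝ := Set.Icc 0 1

/-- The critical set of `f` in `[0,1]`: points where the derivative vanishes. -/
def critSet (f : ℝ → ℝ) : Set ℝ := {x | x ∈ unitI ∧ deriv f x = 0}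

/-- The class `𝓕` of `C^{1+α}` topologically transitive multimodal interval maps with
finitely many non-flat critical points, negative Schwarzian derivative, and critical
orbits that never meet each other (nor themselves). -/
structure MapClassF (f : ℝ → ℝ) : Prop where
  /-- `f` maps `[0,1]` into `[0,1]`. -/
  mapsTo : Set.MapsTo f unitI unitI
  /-- `f` is `C¹`. -/
  smooth : ContDiff ℝ 1 f
  /-- `Df` is `α`-Hölder on `[0,1]` for some `α > 0`. -/
  holder : ∃ α : NNReal, 0 < α ∧ ∃ C : NNReal, HolderOnWith C α (deriv f) unitI
  /-- The critical set is finite. -/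
  critFinite : (critSet f).Finite
  /-- Each critical point is non-flat: `f x = f c + (g x) ^ ℓ` near `c` for a local
  diffeomorphism `g` with `g c = 0` and some critical order `1 < ℓ < ∞`. -/
  nonflat : ∀ c ∈ critSet f, ∃ ℓ : ℝ, 1 < ℓ ∧ ∃ U ∈ nhds c, ∃ g : ℝ → ℝ,
      g c = 0 ∧ ContDiffOn ℝ 1 g U ∧ Set.InjOn g U ∧ (∀ x ∈ U, deriv g x ≠ 0) ∧
      ∀ x ∈ U, f x = f c + g x ^ ℓ
  /-- Negative Schwarzian derivative: `1/√|Df|` is convex on each interval avoiding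
  the critical set. -/
  negSchwarzian : ∀ a b : ℝ, Set.Ioo a b ⊆ unitI \ critSet f →
      ConvexOn ℝ (Set.Ioo a b) fun x => 1 / Real.sqrt |deriv f x|
  /-- `f` is topologically transitive on `[0,1]`. -/
  transitive : ∀ U V : Set ℝ, IsOpen U → IsOpen V →
      (U ∩ unitI).Nonempty → (V ∩ unitI).Nonempty →
      ∃ n : ℕ, (f^[n] '' (U ∩ unitI) ∩ (V ∩ unitI)).Nonempty
  /-- Images of the critical set at different times are disjoint. -/
  critOrbits : ∀ m n : ℕ, m ≠ n → f^[n] '' critSet f ∩ f^[m] '' critSet f = ∅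

/-- `μ ∈ M_f`: `μ` is an `f`-invariant Borel probability measure on `[0,1]`. -/
def InMf (f : ℝ → ℝ) (μ : Measure ℝ) : Prop :=
  IsProbabilityMeasure μ ∧ μ unitI = 1 ∧ μ.map f = μ

/-- A finite Borel partition of `[0,1]`. -/
def IsFinPartition (P : Finset (Set ℝ)) : Prop :=
  (∀ A ∈ P, MeasurableSet A) ∧ (⋃ A ∈ P, A) = unitI ∧
    ∀ A ∈ P, ∀ B ∈ P, A ≠ B → A ∩ B = ∅

/-- The entropy `H_μ(P ∨ f⁻¹ P ∨ ⋯ ∨ f^{-(n-1)} P)` of the `n`-th dynamical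
refinement of the partition `P`. -/
def Hn (f : ℝ → ℝ) (μ : Measure ℝ) (P : Finset (Set ℝ)) (n : ℕ) : ℝ :=
  ∑ σ : Fin n → {A : Set ℝ // A ∈ P},
    Real.negMulLog (μ (⋂ j : Fin n, f^[(j : ℕ)] ⁻¹' (σ j).1)).toReal

/-- The measure-theoretic entropy `h(μ)` of `f` with respect to `μ`: the supremum over
finite Borel partitions of the asymptotic average entropy of refinements. -/
def mEnt (f : ℝ → ℝ) (μ : Measure ℝ) : ℝ :=
  ⨆ P : {P : Finset (Set ℝ) // IsFinPartition P},
    Filter.limsup (fun n : ℕ => Hn f μ P.1 n / n) Filter.atTop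

/-- The Lyapunov exponent `λ(μ) = ∫ log |Df| dμ`. -/
def lyap (f : ℝ → ℝ) (μ : Measure ℝ) : ℝ := ∫ x, Real.log |deriv f x| ∂μ

/-- `λ(μ) > -∞`: since `log |Df|` is bounded above on the (compact) support of `μ`,
this is equivalent to integrability of `log |Df|`. -/
def LyapFinite (f : ℝ → ℝ) (μ : Measure ℝ) : Prop :=
  MeasureTheory.Integrable (fun x => Real.log |deriv f x|) μ

/-- `λ_M := sup {λ(μ) : μ ∈ M_f}`. -/
def lamM (f : ℝ → ℝ) : ℝ :=
  sSup {x | ∃ μ : Measure ℝ, InMf f μ ∧ LyapFinite f μ ∧ x = lyap f μ}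

/-- `λ_m := inf {λ(μ) : μ ∈ M_f}`. -/
def lamm (f : ℝ → ℝ) : ℝ :=
  sInf {x | ∃ μ : Measure ℝ, InMf f μ ∧ LyapFinite f μ ∧ x = lyap f μ}

/-- The pressure function `p(t) = sup {h(μ) - t λ(μ) : μ ∈ M_f, λ(μ) > -∞}`. -/
def press (f : ℝ → ℝ) (t : ℝ) : ℝ :=
  sSup {x | ∃ μ : Measure ℝ, InMf f μ ∧ LyapFinite f μ ∧ x = mEnt f μ - t * lyap f μ}

/-- `t⁺ := sup {t : p(t) > -λ_m t}`, as an extended real number. -/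
def tPlus (f : ℝ → ℝ) : EReal :=
  sSup {s : EReal | ∃ t : ℝ, s = (t : EReal) ∧ -(lamm f) * t < press f t}

/-- `t⁻ := inf {t : p(t) > -λ_M t}`, as an extended real number. -/
def tMinus (f : ℝ → ℝ) : EReal :=
  sInf {s : EReal | ∃ t : ℝ, s = (t : EReal) ∧ -(lamM f) * t < press f t}

/-- `μ` is an equilibrium state for the potential `-t log |Df|`. -/
def EqState (f : ℝ → ℝ) (t : ℝ) (μ : Measure ℝ) : Prop :=
  InMf f μ ∧ LyapFinite f μ ∧ mEnt f μ - t * lyap f μ = press f t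

/-- An acip: an invariant probability measure absolutely continuous with respect to
Lebesgue measure. -/
def IsAcip (f : ℝ → ℝ) (μ : Measure ℝ) : Prop :=
  InMf f μ ∧ μ ≪ (volume : Measure ℝ)

end IT

/-! Only the set of pairs `(h(μ), λ(μ))` matters: entropies are nonnegative and exponents are
bounded above, since `log |Df| ≤ |Df|` is bounded on `[0,1]`. A measure with `h(μ) ≤ η` has free
energy `h(μ) - tλ(μ) ≤ η - tλ_m` for `t > 0` (resp. `≤ η - tλ_M` for `t ≤ 0`), so it suffices to
have `p(t) > -tλ_m` (resp. `p(t) > -tλ_M`). These strict inequalities propagate to `t` from a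
witness `t₂ > t` of `t < t⁺` (resp. `t₁ < t` of `t⁻ < t`), as
`h - tλ = (h - t₂λ) + (t₂ - t)λ ≥ (h - t₂λ) + (t₂ - t)λ_m`. When the free energies are unbounded
above, `p ≡ 0` by the `sSup` convention and the witnesses force `λ_m > 0` or `λ_M < 0` instead. -/

theorem Real.exists_lt_of_lt_sSup {s : Set ℝ} {c : ℝ} (hs : s.Nonempty) (hc : c < sSup s) :
    ∃ x ∈ s, c < x := by
  by_cases hb : BddAbove s
  · exact exists_lt_of_lt_csSup hs hc
  · simpa using not_bddAbove_iff.mp hb c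

theorem Real.limsup_nonneg {α : Type*} {l : Filter α} [l.NeBot] {u : α → ℝ}
    (hu : ∀ n, 0 ≤ u n) : 0 ≤ limsup u l := by
  rw [Filter.limsup_eq]
  exact Real.sInf_nonneg fun a ha => ha.exists.elim fun n hn => (hu n).trans hn

namespace IT

section FreeEnergy

/-- The free energy `h - t λ` of a pair `a = (h, λ)` of an entropy and a Lyapunov exponent. -/
def freeEnergy (t : ℝ) (a : ℝ × ℝ) : ℝ := a.1 - t * a.2

def pressure (A : Set (ℝ × ℝ)) (t : ℝ) : ℝ := sSup (freeEnergy t '' A)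

variable {A : Set (ℝ × ℝ)}

theorem freeEnergy_eq_add (s t : ℝ) (a : ℝ × ℝ) :
    freeEnergy t a = freeEnergy s a + (s - t) * a.2 := by
  unfold freeEnergy; ring

theorem bddAbove_freeEnergy_of_le {s t M : ℝ} (hM : ∀ a ∈ A, a.2 ≤ M) (hst : s ≤ t)
    (h : BddAbove (freeEnergy t '' A)) : BddAbove (freeEnergy s '' A) := by
  obtain ⟨C, hC⟩ := h
  refine ⟨C + (t - s) * M, ?_⟩
  rintro _ ⟨a, ha, rfl⟩
  have := hC ⟨a, ha, rfl⟩
  rw [freeEnergy_eq_add t s]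
  nlinarith [hM a ha]

theorem bddAbove_freeEnergy_of_ge {s t m : ℝ} (hm : ∀ a ∈ A, m ≤ a.2) (hst : s ≤ t)
    (h : BddAbove (freeEnergy s '' A)) : BddAbove (freeEnergy t '' A) := by
  obtain ⟨C, hC⟩ := h
  refine ⟨C - (t - s) * m, ?_⟩
  rintro _ ⟨a, ha, rfl⟩
  have := hC ⟨a, ha, rfl⟩
  rw [freeEnergy_eq_add s t]
  nlinarith [hm a ha]

theorem bddBelow_snd_of_bddAbove_freeEnergy (hh : ∀ a ∈ A, 0 ≤ a.1) {t : ℝ} (ht : 0 < t)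
    (h : BddAbove (freeEnergy t '' A)) : BddBelow (Prod.snd '' A) := by
  obtain ⟨C, hC⟩ := h
  refine ⟨-C / t, ?_⟩
  rintro _ ⟨a, ha, rfl⟩
  have : a.1 - t * a.2 ≤ C := hC ⟨a, ha, rfl⟩
  rw [div_le_iff₀ ht]
  nlinarith [hh a ha]

theorem le_pressure {t : ℝ} (h : BddAbove (freeEnergy t '' A)) {a : ℝ × ℝ} (ha : a ∈ A) :
    freeEnergy t a ≤ pressure A t :=
  le_csSup h ⟨a, ha, rfl⟩

theorem pressure_eq_zero {t : ℝ} (h : ¬BddAbove (freeEnergy t '' A)) : pressure A t = 0 :=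
  Real.sSup_of_not_bddAbove h

theorem exists_entropy_lower_bound_of_lt_pressure {t c : ℝ} (hc : ∀ a ∈ A, -(t * a.2) ≤ c)
    (hP : c < pressure A t) :
    ∃ η : ℝ, 0 < η ∧ ∃ ε : ℝ, 0 < ε ∧
      ∀ a ∈ A, pressure A t - ε < freeEnergy t a → η < a.1 := by
  refine ⟨(pressure A t - c) / 2, by linarith, (pressure A t - c) / 2, by linarith, ?_⟩
  intro a ha hlt
  have := hc a ha
  unfold freeEnergy at hlt
  linarith

/-- `hb` says `b ≤ λ` on `A` if `t < s`, and `λ ≤ b` on `A` if `s < t`. -/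
theorem neg_mul_lt_pressure_of_neg_mul_lt_pressure {s t b : ℝ} (hA : A.Nonempty)
    (hb : ∀ a ∈ A, (s - t) * b ≤ (s - t) * a.2) (hF : BddAbove (freeEnergy t '' A))
    (hs : -b * s < pressure A s) : -b * t < pressure A t := by
  obtain ⟨_, ⟨a, ha, rfl⟩, hlt⟩ := Real.exists_lt_of_lt_sSup (hA.image _) hs
  calc -b * t = -b * s + (s - t) * b := by ring
    _ < freeEnergy s a + (s - t) * a.2 := add_lt_add_of_lt_of_le hlt (hb a ha)
    _ = freeEnergy t a := (freeEnergy_eq_add s t a).symm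
    _ ≤ pressure A t := le_pressure hF ha

theorem exists_entropy_lower_bound_of_bddAbove (hh : ∀ a ∈ A, 0 ≤ a.1) (hA : A.Nonempty)
    (hΛ : BddAbove (Prod.snd '' A)) {t₁ t t₂ : ℝ} (ht₁ : t₁ ≤ t) (ht₂ : t ≤ t₂)
    (h₁ : -sSup (Prod.snd '' A) * t₁ < pressure A t₁)
    (h₂ : -sInf (Prod.snd '' A) * t₂ < pressure A t₂) (hF : BddAbove (freeEnergy t '' A)) :
    ∃ η : ℝ, 0 < η ∧ ∃ ε : ℝ, 0 < ε ∧
      ∀ a ∈ A, pressure A t - ε < freeEnergy t a → η < a.1 := by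
  rcases lt_or_ge 0 t with ht | ht
  · have hm : ∀ a ∈ A, sInf (Prod.snd '' A) ≤ a.2 := fun a ha =>
      csInf_le (bddBelow_snd_of_bddAbove_freeEnergy hh ht hF) ⟨a, ha, rfl⟩
    have := neg_mul_lt_pressure_of_neg_mul_lt_pressure hA
      (fun a ha => mul_le_mul_of_nonneg_left (hm a ha) (sub_nonneg.2 ht₂)) hF h₂
    exact exists_entropy_lower_bound_of_lt_pressure
      (fun a ha => neg_le_neg (mul_le_mul_of_nonneg_left (hm a ha) ht.le)) (by linarith)
  · have hM : ∀ a ∈ A, a.2 ≤ sSup (Prod.snd '' A) := fun a ha => le_csSup hΛ ⟨a, ha, rfl⟩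
    have := neg_mul_lt_pressure_of_neg_mul_lt_pressure hA
      (fun a ha => mul_le_mul_of_nonpos_left (hM a ha) (sub_nonpos.2 ht₁)) hF h₁
    exact exists_entropy_lower_bound_of_lt_pressure
      (fun a ha => neg_le_neg (mul_le_mul_of_nonpos_left (hM a ha) ht)) (by linarith)

theorem exists_entropy_lower_bound_of_not_bddAbove (hA : A.Nonempty)
    (hΛ : BddAbove (Prod.snd '' A)) {t₁ t t₂ : ℝ} (ht₁ : t₁ < t) (ht₂ : t < t₂)
    (h₁ : -sSup (Prod.snd '' A) * t₁ < pressure A t₁)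
    (h₂ : -sInf (Prod.snd '' A) * t₂ < pressure A t₂) (hF : ¬BddAbove (freeEnergy t '' A)) :
    ∃ η : ℝ, 0 < η ∧ ∃ ε : ℝ, 0 < ε ∧
      ∀ a ∈ A, pressure A t - ε < freeEnergy t a → η < a.1 := by
  set m := sInf (Prod.snd '' A)
  set M := sSup (Prod.snd '' A)
  have hM : ∀ a ∈ A, a.2 ≤ M := fun a ha => le_csSup hΛ ⟨a, ha, rfl⟩
  have hm₂ : 0 < m * t₂ := by
    rw [pressure_eq_zero fun h => hF (bddAbove_freeEnergy_of_le hM ht₂.le h)] at h₂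
    linarith
  have hm : ∀ a ∈ A, m ≤ a.2 := by
    have hΛ' : BddBelow (Prod.snd '' A) := by
      by_contra hb
      simp [m, Real.sInf_of_not_bddBelow hb] at hm₂
    exact fun a ha => csInf_le hΛ' ⟨a, ha, rfl⟩
  have hM₁ : 0 < M * t₁ := by
    rw [pressure_eq_zero fun h => hF (bddAbove_freeEnergy_of_ge hm ht₁.le h)] at h₁
    linarith
  have hmM : m ≤ M := hA.elim fun a ha => (hm a ha).trans (hM a ha)
  rcases lt_or_ge 0 t with ht | ht
  · refine exists_entropy_lower_bound_of_lt_pressure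
      (fun a ha => neg_le_neg (mul_le_mul_of_nonneg_left (hm a ha) ht.le)) ?_
    rw [pressure_eq_zero hF]
    nlinarith
  · refine exists_entropy_lower_bound_of_lt_pressure
      (fun a ha => neg_le_neg (mul_le_mul_of_nonpos_left (hM a ha) ht)) ?_
    have hM_neg : M < 0 := neg_of_mul_pos_left hM₁ (by linarith)
    have ht_neg : t < 0 := ht.lt_of_ne fun h => by nlinarith
    rw [pressure_eq_zero hF]
    nlinarith

theorem exists_entropy_lower_bound (hh : ∀ a ∈ A, 0 ≤ a.1) (hΛ : BddAbove (Prod.snd '' A))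
    {t₁ t t₂ : ℝ} (ht₁ : t₁ < t) (ht₂ : t < t₂)
    (h₁ : -sSup (Prod.snd '' A) * t₁ < pressure A t₁)
    (h₂ : -sInf (Prod.snd '' A) * t₂ < pressure A t₂) :
    ∃ η : ℝ, 0 < η ∧ ∃ ε : ℝ, 0 < ε ∧
      ∀ a ∈ A, pressure A t - ε < freeEnergy t a → η < a.1 := by
  rcases A.eq_empty_or_nonempty with rfl | hA
  · exact ⟨1, one_pos, 1, one_pos, by simp⟩
  by_cases hF : BddAbove (freeEnergy t '' A)
  · exact exists_entropy_lower_bound_of_bddAbove hh hA hΛ ht₁.le ht₂.le h₁ h₂ hF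
  · exact exists_entropy_lower_bound_of_not_bddAbove hA hΛ ht₁ ht₂ h₁ h₂ hF

end FreeEnergy

theorem Hn_nonneg (f : ℝ → ℝ) (μ : Measure ℝ) [IsProbabilityMeasure μ] (P : Finset (Set ℝ))
    (n : ℕ) : 0 ≤ Hn f μ P n :=
  Finset.sum_nonneg fun _ _ => Real.negMulLog_nonneg ENNReal.toReal_nonneg
    (ENNReal.toReal_le_of_le_ofReal zero_le_one (by simpa using prob_le_one))

theorem mEnt_nonneg (f : ℝ → ℝ) (μ : Measure ℝ) [IsProbabilityMeasure μ] : 0 ≤ mEnt f μ :=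
  Real.iSup_nonneg fun P =>
    Real.limsup_nonneg fun n => div_nonneg (Hn_nonneg f μ P.1 n) n.cast_nonneg

theorem lyap_le_of_forall_le {f : ℝ → ℝ} {μ : Measure ℝ} (hμ : InMf f μ) (hL : LyapFinite f μ)
    {C : ℝ} (hC : ∀ x ∈ unitI, Real.log |deriv f x| ≤ C) : lyap f μ ≤ C := by
  have := hμ.1
  have hae : ∀ᵐ x ∂μ, x ∈ unitI :=
    mem_ae_iff.mpr ((prob_compl_eq_zero_iff measurableSet_Icc).mpr hμ.2.1)
  calc lyap f μ ≤ ∫ _, C ∂μ := integral_mono_ae hL (integrable_const C) (hae.mono hC)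
    _ = C := by simp

theorem exists_log_abs_deriv_le {f : ℝ → ℝ} (hf : ContDiff ℝ 1 f) :
    ∃ C, ∀ x ∈ unitI, Real.log |deriv f x| ≤ C := by
  obtain ⟨C, hC⟩ := isCompact_Icc.bddAbove_image (hf.continuous_deriv le_rfl).abs.continuousOn
  exact ⟨C, fun x hx => (Real.log_le_self (abs_nonneg _)).trans (hC ⟨x, hx, rfl⟩)⟩

def entropyLyapSet (f : ℝ → ℝ) : Set (ℝ × ℝ) :=
  (fun μ => (mEnt f μ, lyap f μ)) '' {μ | InMf f μ ∧ LyapFinite f μ}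

theorem fst_nonneg_of_mem_entropyLyapSet {f : ℝ → ℝ} :
    ∀ a ∈ entropyLyapSet f, 0 ≤ a.1 := by
  rintro _ ⟨μ, ⟨hμ, -⟩, rfl⟩
  have := hμ.1
  exact mEnt_nonneg f μ

theorem bddAbove_snd_entropyLyapSet {f : ℝ → ℝ} (hf : ContDiff ℝ 1 f) :
    BddAbove (Prod.snd '' entropyLyapSet f) := by
  obtain ⟨C, hC⟩ := exists_log_abs_deriv_le hf
  refine ⟨C, ?_⟩
  rintro _ ⟨_, ⟨μ, ⟨hμ, hL⟩, rfl⟩, rfl⟩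
  exact lyap_le_of_forall_le hμ hL hC

theorem image_entropyLyapSet (f : ℝ → ℝ) (g : ℝ × ℝ → ℝ) :
    g '' entropyLyapSet f = {x | ∃ μ, InMf f μ ∧ LyapFinite f μ ∧ x = g (mEnt f μ, lyap f μ)} := by
  ext x
  simp [entropyLyapSet, eq_comm, and_assoc]

theorem press_eq_pressure (f : ℝ → ℝ) (t : ℝ) : press f t = pressure (entropyLyapSet f) t := by
  rw [pressure, image_entropyLyapSet]
  rfl

theorem lamM_eq_sSup (f : ℝ → ℝ) : lamM f = sSup (Prod.snd '' entropyLyapSet f) := by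
  rw [image_entropyLyapSet]
  rfl

theorem lamm_eq_sInf (f : ℝ → ℝ) : lamm f = sInf (Prod.snd '' entropyLyapSet f) := by
  rw [image_entropyLyapSet]
  rfl

theorem exists_gt_of_lt_tPlus {f : ℝ → ℝ} {t : ℝ} (h : (t : EReal) < tPlus f) :
    ∃ t₂, t < t₂ ∧ -lamm f * t₂ < press f t₂ := by
  obtain ⟨_, ⟨t₂, rfl, h₂⟩, hlt⟩ := lt_sSup_iff.mp h
  exact ⟨t₂, EReal.coe_lt_coe_iff.mp hlt, h₂⟩

theorem exists_lt_of_tMinus_lt {f : ℝ → ℝ} {t : ℝ} (h : tMinus f < (t : EReal)) :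
    ∃ t₁, t₁ < t ∧ -lamM f * t₁ < press f t₁ := by
  obtain ⟨_, ⟨t₁, rfl, h₁⟩, hlt⟩ := sInf_lt_iff.mp h
  exact ⟨t₁, EReal.coe_lt_coe_iff.mp hlt, h₁⟩

/-- For `f ∈ 𝓕` and `t ∈ (t⁻, t⁺)`, measures whose free energy with respect to
`ψ_t` is close enough to `p(t)` have entropy bounded away from zero. -/
theorem entropy_bounded_below_near_pressure (f : ℝ → ℝ) (hf : MapClassF f) (t : ℝ)
    (ht : tMinus f < (t : EReal) ∧ (t : EReal) < tPlus f) :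
    ∃ η : ℝ, 0 < η ∧ ∃ ε : ℝ, 0 < ε ∧ ∀ μ : Measure ℝ, InMf f μ → LyapFinite f μ →
      press f t - ε < mEnt f μ - t * lyap f μ → η < mEnt f μ := by
  obtain ⟨t₁, ht₁, h₁⟩ := exists_lt_of_tMinus_lt ht.1
  obtain ⟨t₂, ht₂, h₂⟩ := exists_gt_of_lt_tPlus ht.2
  rw [lamM_eq_sSup, press_eq_pressure] at h₁
  rw [lamm_eq_sInf, press_eq_pressure] at h₂
  obtain ⟨η, hη, ε, hε, hbound⟩ := exists_entropy_lower_bound fst_nonneg_of_mem_entropyLyapSet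
    (bddAbove_snd_entropyLyapSet hf.smooth) ht₁ ht₂ h₁ h₂
  refine ⟨η, hη, ε, hε, fun μ hμ hL hlt => hbound _ ⟨μ, ⟨hμ, hL⟩, rfl⟩ ?_⟩
  rwa [press_eq_pressure] at hlt

end IT
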